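/- arXiv:2412.16560 — 7 statements merged into one kernel-verified Lean document; each statement's English description precedes it below -/
import Mathlib

section
/- For all words u, v over a finite alphabet A and every letter a ∈ A, δ(u·v, u·a·v) = r(u,a) + ℓ(a,v), i.e., δ(u·v, u·a·v) = δ(u, u·a) + δ(a·v, v). -/
/-- Simon's congruence of order `k`: `u` and `v` have the same subwords
(subsequences) of length at most `k`. -/
def SimonCong {A : Type*} (k : ℕ) (u v : List A) : Prop :=
  ∀ s : List A, s.length ≤ k → (s.Sublist u ↔ s.Sublist v)

/-- The subword distance `δ(u,v) = sup {k | u ∼ₖ v} ∈ ℕ ∪ {∞}`. -/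
noncomputable def delta {A : Type*} (u v : List A) : ℕ∞ :=
  ⨆ k ∈ {k : ℕ | SimonCong k u v}, (k : ℕ∞)

/-- Right side distance `r(u,t) = δ(u, u·t)`. -/
noncomputable def sideR {A : Type*} (u t : List A) : ℕ∞ :=
  delta u (u ++ t)

/-- Left side distance `ℓ(t,u) = δ(t·u, u)`. -/
noncomputable def sideL {A : Type*} (t u : List A) : ℕ∞ :=
  delta (t ++ u) u

/-- The piecewise complexity `h(u)`: the least `n` such that every word
`v` with `u ∼ₙ v` equals `u`. -/
noncomputable def pieceH {A : Type*} (u : List A) : ℕ :=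
  sInf {n : ℕ | ∀ v : List A, SimonCong n u v → v = u}

/-- A word `u` is `m`-reduced if no strict subword of `u` is `∼ₘ`-equivalent to `u`. -/
def MReduced {A : Type*} (m : ℕ) (u : List A) : Prop :=
  ∀ u' : List A, u'.Sublist u → u' ≠ u → ¬ SimonCong m u' u

/-- The piecewise minimality index `ρ(u)`: the least `m` such that `u` is `m`-reduced. -/
noncomputable def rho {A : Type*} (u : List A) : ℕ :=
  sInf {m : ℕ | MReduced m u}

lemma SimonCong.mono {A : Type*} {k j : ℕ} {u v : List A} (h : SimonCong k u v) (hj : j ≤ k) :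
    SimonCong j u v := fun s hs => h s (hs.trans hj)

lemma simonCong_zero {A : Type*} (u v : List A) : SimonCong 0 u v := by
  intro s hs
  have : s = [] := List.eq_nil_of_length_eq_zero (Nat.le_zero.mp hs)
  subst this; simp

lemma delta_eq_coe {A : Type*} {u v : List A} {n : ℕ} (hn : SimonCong n u v)
    (hn1 : ¬ SimonCong (n+1) u v) : delta u v = (n : ℕ∞) := by
  unfold delta
  apply le_antisymm
  · apply iSup₂_le
    intro k hk
    have hkn : k ≤ n := by
      by_contra h
      exact hn1 (SimonCong.mono hk (by omega))
    exact_mod_cast hkn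
  · exact le_iSup₂ (f := fun k (_ : k ∈ {k : ℕ | SimonCong k u v}) => (k : ℕ∞)) n hn

lemma exists_crit {A : Type*} {u v : List A} (huv : u ≠ v) :
    ∃ n, SimonCong n u v ∧ ¬ SimonCong (n+1) u v := by
  have hK : ¬ SimonCong (max u.length v.length) u v := by
    intro h
    have h1 : u.Sublist v := (h u (le_max_left _ _)).1 (List.Sublist.refl u)
    have h2 : v.Sublist u := (h v (le_max_right _ _)).2 (List.Sublist.refl v)
    exact huv (h1.antisymm h2)
  have hS : {k | ¬ SimonCong k u v}.Nonempty := ⟨_, hK⟩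
  set m := sInf {k | ¬ SimonCong k u v} with hm
  have hmem : ¬ SimonCong m u v := Nat.sInf_mem hS
  have hm0 : m ≠ 0 := by
    intro h
    exact hmem (h ▸ simonCong_zero u v)
  refine ⟨m - 1, ?_, ?_⟩
  · by_contra h
    have : m ≤ m - 1 := Nat.sInf_le h
    omega
  · have : m - 1 + 1 = m := by omega
    rw [this]; exact hmem

lemma upper {A : Type*} {u v : List A} {a : A} {r l : ℕ}
    (hr : SimonCong r u (u ++ [a])) (hl : SimonCong l ([a] ++ v) v) :
    SimonCong (r + l) (u ++ v) (u ++ [a] ++ v) := by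
  intro s hs
  constructor
  · intro h
    refine h.trans ?_
    simpa [List.append_assoc] using (List.Sublist.refl u).append ((List.sublist_append_right [a] v))
  · intro h
    rw [List.append_assoc] at h
    rw [List.sublist_append_iff] at h
    obtain ⟨p, q', hsplit, hp, hq'⟩ := h
    rw [List.sublist_append_iff] at hq'
    obtain ⟨q, t, hsplit2, hq, ht⟩ := hq'
    -- s = p ++ q ++ t, p <+ u, q <+ [a], t <+ v
    have hqlen : q.length ≤ 1 := by
      have := hq.length_le; simpa using this
    subst hsplit2; subst hsplit
    by_cases hc : q.length + t.length ≤ l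
    · have hqt : (q ++ t).Sublist v := by
        refine (hl (q ++ t) (by simp; omega)).1 ?_
        exact hq.append ht
      exact hp.append hqt
    ·
      have hlen : p.length + (q.length + t.length) ≤ r + l := by
        have := hs; simp at this; omega
      have hpq : (p ++ q).Sublist u := by
        refine (hr (p ++ q) (by simp; omega)).2 ?_
        exact hp.append hq
      have : ((p ++ q) ++ t).Sublist (u ++ v) := hpq.append ht
      simpa [List.append_assoc] using this

lemma lower {A : Type*} {u v : List A} {a : A} {r l : ℕ}
    (hr : ¬ SimonCong (r+1) u (u ++ [a])) (hl : ¬ SimonCong (l+1) ([a] ++ v) v) :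
    ¬ SimonCong (r + l + 1) (u ++ v) (u ++ [a] ++ v) := by
  -- extract w₁
  rw [SimonCong] at hr hl
  push_neg at hr hl
  obtain ⟨s1, hs1len, hs1⟩ := hr
  obtain ⟨s2, hs2len, hs2⟩ := hl
  have hs1' : s1.Sublist (u ++ [a]) ∧ ¬ s1.Sublist u := by
    rcases hs1 with ⟨h1, h2⟩ | ⟨h1, h2⟩
    · exact absurd (h1.trans (List.sublist_append_left u [a])) h2
    · exact ⟨h2, h1⟩
  have hs2' : s2.Sublist ([a] ++ v) ∧ ¬ s2.Sublist v := by
    rcases hs2 with ⟨h1, h2⟩ | ⟨h1, h2⟩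
    · exact ⟨h1, h2⟩
    · exact absurd (h2.trans (List.sublist_append_right [a] v)) h1
  obtain ⟨hsub1, hnot1⟩ := hs1'
  obtain ⟨hsub2, hnot2⟩ := hs2'
  -- s1 = w1 ++ [a]
  rw [List.sublist_append_iff] at hsub1 hsub2
  obtain ⟨w1, q1, he1, hw1, hq1⟩ := hsub1
  obtain ⟨q2, w2, he2, hq2, hw2⟩ := hsub2
  have hq1' : q1 = [a] := by
    rcases List.sublist_singleton.mp hq1 with h | h
    · exfalso; subst h; simp at he1; subst he1; exact hnot1 hw1
    · exact h
  have hq2' : q2 = [a] := by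
    rcases List.sublist_singleton.mp hq2 with h | h
    · exfalso; subst h; simp at he2; subst he2; exact hnot2 hw2
    · exact h
  subst hq1'; subst hq2'
  -- witness: w1 ++ [a] ++ w2
  intro hsim
  have hwlen : (w1 ++ [a] ++ w2).length ≤ r + l + 1 := by
    subst he1; subst he2
    simp at hs1len hs2len ⊢
    omega
  have hwin : (w1 ++ [a] ++ w2).Sublist (u ++ [a] ++ v) :=
    (hw1.append (List.Sublist.refl [a])).append hw2
  have hwout : (w1 ++ [a] ++ w2).Sublist (u ++ v) := (hsim _ hwlen).2 hwin
  rw [List.sublist_append_iff] at hwout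
  obtain ⟨t1, t2, heq, ht1, ht2⟩ := hwout
  rw [List.append_assoc] at heq
  rw [List.append_eq_append_iff] at heq
  rcases heq with ⟨m, hm1, hm2⟩ | ⟨m, hm1, hm2⟩
  · -- t1 = w1 ++ m, [a] ++ w2 = m ++ t2
    cases m with
    | nil =>
      simp at hm2
      subst hm2
      exact hnot2 (he2 ▸ ht2)
    | cons b m' =>
      have hb : b = a ∧ w2 = m' ++ t2 := by
        have := hm2
        simp at this
        exact ⟨this.1.symm, this.2⟩
      obtain ⟨hb, _⟩ := hb
      rw [hb] at hm1
      have : (w1 ++ [a]).Sublist t1 := by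
        rw [hm1]
        have : (w1 ++ [a]).Sublist (w1 ++ (a :: m')) := by
          refine (List.Sublist.refl w1).append ?_
          simp
        simpa using this
      exact hnot1 (he1 ▸ (this.trans ht1))
  · -- w1 = t1 ++ m, t2 = m ++ ([a] ++ w2)
    have : ([a] ++ w2).Sublist t2 := by
      rw [hm2]
      exact List.sublist_append_right m _
    exact hnot2 (he2 ▸ (this.trans ht2))

theorem stmt0 {A : Type*} [Fintype A] [Nonempty A] (u v : List A) (a : A) :
    delta (u ++ v) (u ++ [a] ++ v) = sideR u [a] + sideL [a] v ∧
    delta (u ++ v) (u ++ [a] ++ v) = delta u (u ++ [a]) + delta ([a] ++ v) v := by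
  have h1 : u ≠ u ++ [a] := by simp
  have h2 : [a] ++ v ≠ v := by simp
  obtain ⟨r, hr, hr1⟩ := exists_crit h1
  obtain ⟨l, hl, hl1⟩ := exists_crit h2
  have key : delta (u ++ v) (u ++ [a] ++ v) = delta u (u ++ [a]) + delta ([a] ++ v) v := by
    rw [delta_eq_coe hr hr1, delta_eq_coe hl hl1,
      delta_eq_coe (upper hr hl) (by have := lower hr1 hl1; simpa using this)]
    push_cast
    ring
  exact ⟨key, key⟩
end

section
/- Let m > 0. A non-empty word u is m-reduced if and only if r(u₁,a) + ℓ(a,u₂) < m for all factorizations u = u₁·a·u₂ with a a letter and u₁, u₂ words. -/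
/-!
Deleting one letter `a` from `u = u₁ a u₂` gives a subword `u₁ u₂`, and a word that
separates `u₁ u₂` from `u₁ a u₂` must use that occurrence of `a`: it has the form `t₁ a t₂`
where `t₁ a` separates `u₁` from `u₁ a` and `a t₂` separates `u₂` from `a u₂`. Conversely any
two such separators glue to a separator of `u₁ u₂` and `u₁ a u₂`. Hence
`δ(u₁ u₂, u₁ a u₂) = r(u₁, a) + ℓ(a, u₂)`. Since every strict subword of `u` lies between
`u` and some one-letter deletion `u₁ u₂`, the word `u` is `m`-reduced exactly when no such
deletion is `∼ₘ`-equivalent to `u`, i.e. when all these sums are `< m`.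
-/

namespace SimonCong

variable {A : Type*} {k j : ℕ} {u v w : List A}

theorem mono_s2 (h : SimonCong k u v) (hj : j ≤ k) : SimonCong j u v :=
  fun s hs => h s (hs.trans hj)

theorem zero (u v : List A) : SimonCong 0 u v := by
  intro s hs
  rw [List.length_eq_zero_iff.mp (Nat.le_zero.mp hs)]
  simp

theorem symm (h : SimonCong k u v) : SimonCong k v u :=
  fun s hs => (h s hs).symm

theorem comm : SimonCong k u v ↔ SimonCong k v u :=
  ⟨symm, symm⟩

theorem of_sublist_of_sublist (h : SimonCong k u v) (huw : u.Sublist w) (hwv : w.Sublist v) :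
    SimonCong k w v :=
  fun s hs => ⟨fun hsw => hsw.trans hwv, fun hsv => ((h s hs).mpr hsv).trans huw⟩

theorem not_iff_exists_of_sublist (h : u.Sublist v) :
    ¬ SimonCong k u v ↔ ∃ s : List A, s.length ≤ k ∧ s.Sublist v ∧ ¬ s.Sublist u := by
  simp only [SimonCong, not_forall, exists_prop]
  refine exists_congr fun s => and_congr_right fun _ => ?_
  refine ⟨fun hs => ⟨by_contra fun hsv => hs (iff_of_false (fun hsu => hsv (hsu.trans h)) hsv),
    fun hsu => hs (iff_of_true hsu (hsu.trans h))⟩, fun ⟨hsv, hsu⟩ hs => hsu (hs.mpr hsv)⟩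

end SimonCong

section Delta

variable {A : Type*} {u v : List A}

theorem simonCong_iff_le_delta {k : ℕ} : SimonCong k u v ↔ (k : ℕ∞) ≤ delta u v := by
  refine ⟨fun h => le_iSup₂ (f := fun (j : ℕ) (_ : j ∈ {j | SimonCong j u v}) => (j : ℕ∞)) k h,
    fun hk => ?_⟩
  by_contra h
  have hk0 : k ≠ 0 := by rintro rfl; exact h (SimonCong.zero u v)
  -- `∼ⱼ` is downward closed, so every `j` in the supremum is `< k`.
  have : delta u v ≤ (k - 1 : ℕ) :=
    iSup₂_le fun j hj => Nat.cast_le.mpr <|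
      Nat.le_sub_one_of_lt <| lt_of_not_ge fun hkj => h (SimonCong.mono_s2 hj hkj)
  exact absurd (hk.trans this) (by norm_cast; omega)

theorem not_simonCong_iff_delta_lt {k : ℕ} : ¬ SimonCong k u v ↔ delta u v < k := by
  rw [simonCong_iff_le_delta, not_le]

theorem delta_comm (u v : List A) : delta u v = delta v u :=
  ENat.eq_of_forall_natCast_le_iff fun _ => by
    rw [← simonCong_iff_le_delta, ← simonCong_iff_le_delta, SimonCong.comm]

theorem delta_lt_iff_of_sublist (h : u.Sublist v) {k : ℕ} :
    delta u v < k ↔ ∃ s : List A, s.length ≤ k ∧ s.Sublist v ∧ ¬ s.Sublist u := by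
  rw [← not_simonCong_iff_delta_lt, SimonCong.not_iff_exists_of_sublist h]

end Delta

section Deletion

variable {A : Type*} {s t₁ t₂ u₁ u₂ : List A} {a : A}

theorem List.sublist_append_cons (u₁ u₂ : List A) (a : A) :
    (u₁ ++ u₂).Sublist (u₁ ++ a :: u₂) :=
  (List.append_sublist_append_left u₁).mpr (List.sublist_cons_self a u₂)

theorem exists_split_of_sublist_append_cons (hs : s.Sublist (u₁ ++ a :: u₂))
    (hs' : ¬ s.Sublist (u₁ ++ u₂)) :
    ∃ t₁ t₂, s = t₁ ++ a :: t₂ ∧ t₁.Sublist u₁ ∧ t₂.Sublist u₂ ∧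
      ¬ (t₁ ++ [a]).Sublist u₁ ∧ ¬ (a :: t₂).Sublist u₂ := by
  obtain ⟨t₁, q, rfl, ht₁, hq⟩ := List.sublist_append_iff.mp hs
  obtain hq | ⟨t₂, rfl, ht₂⟩ := List.sublist_cons_iff.mp hq
  · exact absurd (ht₁.append hq) hs'
  refine ⟨t₁, t₂, rfl, ht₁, ht₂, fun h => hs' ?_, fun h => hs' (ht₁.append h)⟩
  simpa using h.append ht₂

theorem not_sublist_append_of_not_sublist (h₁ : ¬ (t₁ ++ [a]).Sublist u₁)
    (h₂ : ¬ (a :: t₂).Sublist u₂) : ¬ (t₁ ++ a :: t₂).Sublist (u₁ ++ u₂) := by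
  intro h
  obtain ⟨p, q, hpq, hp, hq⟩ := List.sublist_append_iff.mp h
  obtain ⟨c, rfl, hc⟩ | ⟨c, -, rfl⟩ := List.append_eq_append_iff.mp hpq
  · cases c with
    | nil => exact h₂ (by simpa [hc] using hq)
    | cons b c =>
      obtain ⟨rfl, -⟩ := List.cons.inj hc
      exact h₁ (((List.append_sublist_append_left t₁).mpr (by simp)).trans hp)
  · exact h₂ ((List.sublist_append_right c _).trans hq)

theorem sideR_le_iff (n : ℕ) :
    sideR u₁ [a] ≤ n ↔ ∃ t : List A, t.length ≤ n ∧ t.Sublist u₁ ∧ ¬ (t ++ [a]).Sublist u₁ := by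
  rw [sideR, ← ENat.lt_add_one_iff (ENat.natCast_ne_top n), ← Nat.cast_add_one,
    delta_lt_iff_of_sublist (List.sublist_append_left u₁ [a])]
  constructor
  · rintro ⟨s, hs, hsv, hsu⟩
    obtain ⟨t, t', rfl, ht, ht', hn, -⟩ :=
      exists_split_of_sublist_append_cons (u₂ := []) hsv (by rwa [List.append_nil])
    obtain rfl := List.sublist_nil.mp ht'
    exact ⟨t, by simpa using hs, ht, hn⟩
  · rintro ⟨t, ht, htu, hn⟩
    exact ⟨t ++ [a], by simpa using ht, htu.append (List.Sublist.refl _), hn⟩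

theorem sideL_le_iff (n : ℕ) :
    sideL [a] u₂ ≤ n ↔ ∃ t : List A, t.length ≤ n ∧ t.Sublist u₂ ∧ ¬ (a :: t).Sublist u₂ := by
  rw [sideL, List.singleton_append, delta_comm, ← ENat.lt_add_one_iff (ENat.natCast_ne_top n),
    ← Nat.cast_add_one, delta_lt_iff_of_sublist (List.sublist_cons_self a u₂)]
  constructor
  · rintro ⟨s, hs, hsv, hsu⟩
    obtain ⟨t', t, rfl, ht', ht, -, hn⟩ :=
      exists_split_of_sublist_append_cons (u₁ := []) hsv (by rwa [List.nil_append])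
    obtain rfl := List.sublist_nil.mp ht'
    exact ⟨t, by simpa using hs, ht, hn⟩
  · rintro ⟨t, ht, htu, hn⟩
    exact ⟨a :: t, by simpa using ht, htu.cons_cons a, hn⟩

theorem delta_deletion_lt_iff (k : ℕ) :
    delta (u₁ ++ u₂) (u₁ ++ a :: u₂) < k ↔ sideR u₁ [a] + sideL [a] u₂ < k := by
  rw [delta_lt_iff_of_sublist (List.sublist_append_cons u₁ u₂ a)]
  constructor
  · rintro ⟨s, hs, hsv, hsu⟩
    obtain ⟨t₁, t₂, rfl, ht₁, ht₂, hn₁, hn₂⟩ := exists_split_of_sublist_append_cons hsv hsu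
    have hR := (sideR_le_iff t₁.length).mpr ⟨t₁, le_rfl, ht₁, hn₁⟩
    have hL := (sideL_le_iff t₂.length).mpr ⟨t₂, le_rfl, ht₂, hn₂⟩
    calc sideR u₁ [a] + sideL [a] u₂ ≤ t₁.length + t₂.length := add_le_add hR hL
      _ < k := by
        simp only [List.length_append, List.length_cons] at hs
        exact_mod_cast (show t₁.length + t₂.length < k by omega)
  · intro h
    obtain ⟨hR, hL⟩ := ENat.add_lt_top.mp (h.trans (ENat.natCast_lt_top k))
    lift sideR u₁ [a] to ℕ using hR.ne with r hr
    lift sideL [a] u₂ to ℕ using hL.ne with l hl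
    obtain ⟨t₁, hlen₁, ht₁, hn₁⟩ := (sideR_le_iff r).mp hr.ge
    obtain ⟨t₂, hlen₂, ht₂, hn₂⟩ := (sideL_le_iff l).mp hl.ge
    refine ⟨t₁ ++ a :: t₂, ?_, ht₁.append (ht₂.cons_cons a),
      not_sublist_append_of_not_sublist hn₁ hn₂⟩
    have : r + l < k := by exact_mod_cast h
    simp only [List.length_append, List.length_cons]
    omega

theorem delta_deletion (u₁ u₂ : List A) (a : A) :
    delta (u₁ ++ u₂) (u₁ ++ a :: u₂) = sideR u₁ [a] + sideL [a] u₂ :=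
  ENat.eq_of_forall_natCast_le_iff fun k => by
    simpa only [not_lt] using not_congr (delta_deletion_lt_iff (u₁ := u₁) (u₂ := u₂) (a := a) k)

end Deletion

section Reduced

variable {A : Type*}

theorem List.Sublist.exists_deletion {u' u : List A} (h : u'.Sublist u) (hne : u' ≠ u) :
    ∃ u₁ u₂ a, u = u₁ ++ a :: u₂ ∧ u'.Sublist (u₁ ++ u₂) := by
  induction h with
  | slnil => exact absurd rfl hne
  | cons a h => exact ⟨[], _, a, rfl, h⟩
  | @cons_cons l₁ l₂ a h ih =>
    obtain ⟨u₁, u₂, b, rfl, hs⟩ := ih fun heq => hne (heq ▸ rfl)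
    exact ⟨a :: u₁, u₂, b, rfl, hs.cons_cons a⟩

theorem mReduced_iff_forall_deletion (m : ℕ) (u : List A) :
    MReduced m u ↔ ∀ (u₁ u₂ : List A) (a : A), u = u₁ ++ a :: u₂ →
      ¬ SimonCong m (u₁ ++ u₂) (u₁ ++ a :: u₂) := by
  constructor
  · rintro hred u₁ u₂ a rfl
    refine hred _ (List.sublist_append_cons u₁ u₂ a) fun h => ?_
    simpa using congrArg List.length h
  · rintro hdel u' hsub hne hcong
    obtain ⟨u₁, u₂, a, rfl, hsub'⟩ := hsub.exists_deletion hne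
    exact hdel u₁ u₂ a rfl <| hcong.of_sublist_of_sublist hsub'
      (List.sublist_append_cons u₁ u₂ a)

end Reduced

theorem stmt2_general {A : Type*} (m : ℕ) (u : List A) :
    MReduced m u ↔
      ∀ (u₁ u₂ : List A) (a : A), u = u₁ ++ a :: u₂ →
        sideR u₁ [a] + sideL [a] u₂ < (m : ℕ∞) := by
  simp only [mReduced_iff_forall_deletion, not_simonCong_iff_delta_lt, delta_deletion]

theorem stmt2 {A : Type*} [Fintype A] [Nonempty A] (m : ℕ) (hm : 0 < m)
    (u : List A) (hu : u ≠ []) :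
    MReduced m u ↔
      ∀ (u₁ u₂ : List A) (a : A), u = u₁ ++ a :: u₂ →
        sideR u₁ [a] + sideL [a] u₂ < (m : ℕ∞) :=
  stmt2_general m u
end

section
/- For every word u over a nonempty finite alphabet A and all letters a, b: r(ε,a) = 0; r(u·b, a) = r(u,a) + 1 if a = b; and r(u·b, a) = min(r(u,b) + 1, r(u,a)) if a ≠ b. -/
/- ---------- auxiliary development ---------- -/

lemma sublist_concat_iff {A : Type*} {s u : List A} {a : A} :
    s.Sublist (u ++ [a]) ↔ s.Sublist u ∨ ∃ t, s = t ++ [a] ∧ t.Sublist u := by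
  constructor
  · intro h
    have h' : s.reverse.Sublist (a :: u.reverse) := by
      have := List.reverse_sublist.mpr h
      simpa using this
    rcases List.sublist_cons_iff.mp h' with h'' | ⟨r, hr, hrs⟩
    · left; exact List.reverse_sublist.mp (by simpa using h'')
    · right
      refine ⟨r.reverse, ?_, ?_⟩
      · have : s.reverse.reverse = (a :: r).reverse := by rw [hr]
        simpa using this
      · exact List.reverse_sublist.mp (by simpa using hrs)
  · rintro (h | ⟨t, rfl, ht⟩)
    · exact h.trans (List.sublist_append_left u [a])
    · exact (List.append_sublist_append_right [a]).mpr ht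

/-- The set of lengths of witnesses showing `u ≁ (|s|+1) u·a`. -/
def Wit {A : Type*} (u : List A) (a : A) : Set ℕ :=
  {n | ∃ s : List A, s.length = n ∧ s.Sublist u ∧ ¬ (s ++ [a]).Sublist u}

lemma wit_nonempty {A : Type*} (u : List A) (a : A) : (Wit u a).Nonempty := by
  refine ⟨u.length, u, rfl, List.Sublist.refl u, fun h => ?_⟩
  have := h.length_le
  simp at this

/-- The subword side distance as a natural number. -/
noncomputable def hh {A : Type*} (u : List A) (a : A) : ℕ := sInf (Wit u a)

lemma simonCong_iff_le_hh {A : Type*} (u : List A) (a : A) (k : ℕ) :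
    SimonCong k u (u ++ [a]) ↔ k ≤ hh u a := by
  constructor
  · intro hc
    apply le_csInf (wit_nonempty u a)
    rintro n ⟨s, rfl, hs, hns⟩
    by_contra hlt
    push_neg at hlt
    have h1 : (s ++ [a]).Sublist (u ++ [a]) :=
      (List.append_sublist_append_right [a]).mpr hs
    have h2 : (s ++ [a]).Sublist u := by
      refine (hc (s ++ [a]) ?_).mpr h1
      simp only [List.length_append, List.length_singleton]
      omega
    exact hns h2
  · intro hk s hs
    constructor
    · intro h; exact h.trans (List.sublist_append_left u [a])
    · intro h
      rcases sublist_concat_iff.mp h with h' | ⟨t, rfl, ht⟩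
      · exact h'
      · by_contra hnot
        have hle : hh u a ≤ t.length := Nat.sInf_le ⟨t, rfl, ht, hnot⟩
        simp only [List.length_append, List.length_singleton] at hs
        omega

lemma delta_concat {A : Type*} (u : List A) (a : A) :
    delta u (u ++ [a]) = (hh u a : ℕ∞) := by
  apply le_antisymm
  · apply iSup₂_le
    intro k hk
    exact_mod_cast (simonCong_iff_le_hh u a k).mp hk
  · exact le_iSup₂_of_le (hh u a) ((simonCong_iff_le_hh u a _).mpr le_rfl) le_rfl

lemma hh_nil {A : Type*} (a : A) : hh ([] : List A) a = 0 := by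
  apply Nat.le_antisymm _ (Nat.zero_le _)
  apply Nat.sInf_le
  exact ⟨[], rfl, List.Sublist.refl _, by simp⟩

lemma hh_concat_same {A : Type*} (u : List A) (a : A) :
    hh (u ++ [a]) a = hh u a + 1 := by
  apply le_antisymm
  · obtain ⟨t, htlen, ht, hnt⟩ := Nat.sInf_mem (wit_nonempty u a)
    apply Nat.sInf_le
    refine ⟨t ++ [a], by simp [hh, htlen], (List.append_sublist_append_right [a]).mpr ht, ?_⟩
    intro hcon
    exact hnt ((List.append_sublist_append_right [a]).mp hcon)
  · apply le_csInf (wit_nonempty _ a)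
    rintro n ⟨s, rfl, hs, hns⟩
    have hsu : ¬ s.Sublist u := fun h =>
      hns ((List.append_sublist_append_right [a]).mpr h)
    rcases sublist_concat_iff.mp hs with h | ⟨t, rfl, ht⟩
    · exact absurd h hsu
    · have hle : hh u a ≤ t.length := Nat.sInf_le ⟨t, rfl, ht, hsu⟩
      simp only [List.length_append, List.length_singleton]
      omega

lemma hh_concat_ne {A : Type*} (u : List A) (a b : A) (hab : a ≠ b) :
    hh (u ++ [b]) a = min (hh u b + 1) (hh u a) := by
  apply le_antisymm
  · apply le_min
    · -- upper bound hh u b + 1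
      obtain ⟨t, htlen, ht, hnt⟩ := Nat.sInf_mem (wit_nonempty u b)
      apply Nat.sInf_le
      refine ⟨t ++ [b], by simp [hh, htlen],
        (List.append_sublist_append_right [b]).mpr ht, ?_⟩
      intro hcon
      rcases sublist_concat_iff.mp hcon with h' | ⟨t', heq, ht'⟩
      · exact hnt ((List.sublist_append_left (t ++ [b]) [a]).trans h')
      · have : a = b := by
          have h2 := (List.append_inj' heq rfl).2
          simpa using h2
        exact hab this
    · -- upper bound hh u a
      obtain ⟨s, hslen, hs, hns⟩ := Nat.sInf_mem (wit_nonempty u a)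
      apply Nat.sInf_le
      refine ⟨s, hslen, hs.trans (List.sublist_append_left u [b]), ?_⟩
      intro hcon
      rcases sublist_concat_iff.mp hcon with h' | ⟨t', heq, ht'⟩
      · exact hns h'
      · have : a = b := by
          have h2 := (List.append_inj' heq rfl).2
          simpa using h2
        exact hab this
  · apply le_csInf (wit_nonempty _ a)
    rintro n ⟨s, rfl, hs, hns⟩
    have hnsu : ¬ (s ++ [a]).Sublist u := fun h =>
      hns (h.trans (List.sublist_append_left u [b]))
    rcases sublist_concat_iff.mp hs with h | ⟨t, rfl, ht⟩
    · exact le_trans (min_le_right _ _) (Nat.sInf_le ⟨s, rfl, h, hnsu⟩)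
    · by_cases htb : (t ++ [b]).Sublist u
      · exact le_trans (min_le_right _ _) (Nat.sInf_le ⟨t ++ [b], rfl, htb, hnsu⟩)
      · have hle : hh u b ≤ t.length := Nat.sInf_le ⟨t, rfl, ht, htb⟩
        refine le_trans (min_le_left _ _) ?_
        simp only [List.length_append, List.length_singleton]
        omega

lemma sideR_eq_hh {A : Type*} (u : List A) (a : A) :
    sideR u [a] = (hh u a : ℕ∞) := delta_concat u a

theorem stmt6 {A : Type*} [Fintype A] [Nonempty A] (u : List A) (a b : A) :
    sideR ([] : List A) [a] = 0 ∧
    (a = b → sideR (u ++ [b]) [a] = sideR u [a] + 1) ∧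
    (a ≠ b → sideR (u ++ [b]) [a] = min (sideR u [b] + 1) (sideR u [a])) := by
  refine ⟨?_, ?_, ?_⟩
  · rw [sideR_eq_hh, hh_nil]; rfl
  · rintro rfl
    rw [sideR_eq_hh, sideR_eq_hh, hh_concat_same]
    push_cast
    rfl
  · intro hab
    rw [sideR_eq_hh, sideR_eq_hh, sideR_eq_hh, hh_concat_ne u a b hab,
      Nat.mono_cast.map_min]
    push_cast
    rfl
end

section
/- For all words u, v over a nonempty finite alphabet A, ρ(u·v) ≤ ρ(u) + ρ(v). -/
/-!
Take `m = ρ(u)`, `n = ρ(v)` and a strict subword `u'·v'` of `u·v` with `u' ⊑ u`, `v' ⊑ v`;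
by reversing all words we may assume `u' ≠ u`. Reducedness of `u` gives a subword `s` of `u`
with `|s| ≤ m` and `s ⋢ u'`, and reducedness of `v` a subword `t` of `v` with `|t| ≤ n` such
that no word `c·t` with `c ∈ A` is a subword of `v`. Then `s·t` is a subword of `u·v` of length
at most `m + n`, but it is not a subword of `u'·v'`: an embedding would have to send the last
letter of `s` together with all of `t` into `v'`.
-/

open List

section

variable {A : Type*}

namespace SimonCong

variable {k : ℕ} {a b : List A}

theorem reverse (h : SimonCong k a b) : SimonCong k a.reverse b.reverse := by
  intro s hs
  simpa only [sublist_reverse_iff] using h s.reverse (by simpa using hs)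

theorem exists_sublist_not_sublist (hab : a <+ b) (h : ¬ SimonCong k a b) :
    ∃ s : List A, s.length ≤ k ∧ s <+ b ∧ ¬ s <+ a := by
  by_contra! hno
  exact h fun s hs => ⟨fun hsa => hsa.trans hab, hno s hs⟩

end SimonCong

theorem exists_cons_sublist_of_append_sublist_append {s t a b : List A}
    (h : s ++ t <+ a ++ b) (hs : ¬ s <+ a) : ∃ c, c :: t <+ b := by
  obtain ⟨α, β, heq, hα, hβ⟩ := sublist_append_iff.mp h
  rcases append_eq_append_iff.mp heq with ⟨γ, rfl, -⟩ | ⟨_ | ⟨c, γ⟩, rfl, rfl⟩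
  · exact absurd ((sublist_append_left s γ).trans hα) hs
  · exact absurd (by simpa using hα) hs
  · exact ⟨c, (cons_sublist_cons.mpr (sublist_append_right γ t)).trans hβ⟩

theorem mReduced_length (u : List A) : MReduced u.length u := fun _ hsub hne hcong =>
  hne (hsub.eq_of_length_le ((hcong u le_rfl).mpr (Sublist.refl u)).length_le)

theorem mReduced_rho (u : List A) : MReduced (rho u) u :=
  Nat.sInf_mem (s := {m | MReduced m u}) ⟨u.length, mReduced_length u⟩

namespace MReduced

variable {m : ℕ} {u : List A}

theorem reverse (h : MReduced m u) : MReduced m u.reverse := by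
  intro w hsub hne hcong
  refine h w.reverse (by simpa using reverse_sublist.mpr hsub) (fun he => hne ?_) ?_
  · rw [← he, reverse_reverse]
  · simpa using hcong.reverse

theorem exists_sublist_forall_not_cons_sublist (h : MReduced m u) :
    ∃ t : List A, t.length ≤ m ∧ t <+ u ∧ ∀ c, ¬ c :: t <+ u := by
  cases u with
  | nil => exact ⟨[], Nat.zero_le m, Sublist.refl [], fun c hc => by simp at hc⟩
  | cons x xs =>
    obtain ⟨t, ht, htu, htxs⟩ := SimonCong.exists_sublist_not_sublist (sublist_cons_self x xs)
      (h xs (sublist_cons_self x xs) (by simp))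
    exact ⟨t, ht, htu, fun c hc => htxs hc.tail⟩

theorem not_simonCong_append {n : ℕ} {v u' v' : List A} (hu : MReduced m u)
    (hv : MReduced n v) (hu' : u' <+ u) (hne : u' ≠ u) (hv' : v' <+ v) :
    ¬ SimonCong (m + n) (u' ++ v') (u ++ v) := by
  intro hcong
  obtain ⟨s, hs, hsu, hsu'⟩ := SimonCong.exists_sublist_not_sublist hu' (hu u' hu' hne)
  obtain ⟨t, ht, htv, htv'⟩ := hv.exists_sublist_forall_not_cons_sublist
  have hst : s ++ t <+ u' ++ v' :=
    (hcong (s ++ t) (by simpa using Nat.add_le_add hs ht)).mpr (hsu.append htv)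
  obtain ⟨c, hc⟩ := exists_cons_sublist_of_append_sublist_append hst hsu'
  exact htv' c (hc.trans hv')

theorem append {n : ℕ} {v : List A} (hu : MReduced m u) (hv : MReduced n v) :
    MReduced (m + n) (u ++ v) := by
  intro w hsub hne hcong
  obtain ⟨u', v', rfl, hu', hv'⟩ := sublist_append_iff.mp hsub
  by_cases hu'u : u' = u
  · subst hu'u
    refine hv.reverse.not_simonCong_append hu.reverse (reverse_sublist.mpr hv')
      (fun he => hne (by rw [reverse_injective he])) (reverse_sublist.mpr hu') ?_
    simpa only [reverse_append, Nat.add_comm m n] using hcong.reverse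
  · exact hu.not_simonCong_append hv hu' hu'u hv' hcong

end MReduced

end

theorem stmt10_general {A : Type*} (u v : List A) :
    rho (u ++ v) ≤ rho u + rho v :=
  Nat.sInf_le ((mReduced_rho u).append (mReduced_rho v))

theorem stmt10 {A : Type*} [Fintype A] [Nonempty A] (u v : List A) :
    rho (u ++ v) ≤ rho u + rho v :=
  stmt10_general u v
end

section
/- For all words u, v over a nonempty finite alphabet A: h(u) ≤ h(u·v), h(v) ≤ h(u·v), ρ(u) ≤ ρ(u·v), and ρ(v) ≤ ρ(u·v). -/
lemma simonCong_symm {A : Type*} {k : ℕ} {u v : List A} (h : SimonCong k u v) :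
    SimonCong k v u := fun s hs => (h s hs).symm

lemma congR_aux {A : Type*} {k : ℕ} {u u' v : List A} (h : SimonCong k u u')
    {s : List A} (hs : s.length ≤ k) (hsub : s.Sublist (u ++ v)) :
    s.Sublist (u' ++ v) := by
  rw [List.sublist_append_iff] at hsub ⊢
  obtain ⟨s1, s2, rfl, h1, h2⟩ := hsub
  refine ⟨s1, s2, rfl, (h s1 ?_).mp h1, h2⟩
  simp only [List.length_append] at hs
  omega

lemma congL_aux {A : Type*} {k : ℕ} {u u' v : List A} (h : SimonCong k u u')
    {s : List A} (hs : s.length ≤ k) (hsub : s.Sublist (v ++ u)) :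
    s.Sublist (v ++ u') := by
  rw [List.sublist_append_iff] at hsub ⊢
  obtain ⟨s1, s2, rfl, h1, h2⟩ := hsub
  refine ⟨s1, s2, rfl, h1, (h s2 ?_).mp h2⟩
  simp only [List.length_append] at hs
  omega

lemma congR {A : Type*} {k : ℕ} {u u' : List A} (h : SimonCong k u u') (v : List A) :
    SimonCong k (u ++ v) (u' ++ v) :=
  fun s hs => ⟨congR_aux h hs, congR_aux (simonCong_symm h) hs⟩

lemma congL {A : Type*} {k : ℕ} {u u' : List A} (h : SimonCong k u u') (v : List A) :
    SimonCong k (v ++ u) (v ++ u') :=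
  fun s hs => ⟨congL_aux h hs, congL_aux (simonCong_symm h) hs⟩

lemma hSet_nonempty {A : Type*} (w : List A) :
    (w.length + 1) ∈ {n : ℕ | ∀ v : List A, SimonCong n w v → v = w} := by
  intro v h
  have hw : w.Sublist v := (h w (by omega)).mp (List.Sublist.refl w)
  have hlen : v.length ≤ w.length := by
    by_contra hlen
    push_neg at hlen
    have hs : (v.take (w.length + 1)).Sublist v := List.take_sublist _ _
    have hlen' : (v.take (w.length + 1)).length = w.length + 1 := by
      rw [List.length_take]; omega
    have := (h _ (le_of_eq hlen')).mpr hs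
    have := this.length_le
    omega
  exact ((hw.eq_of_length_le hlen)).symm

lemma mSet_nonempty {A : Type*} (w : List A) :
    w.length ∈ {m : ℕ | MReduced m w} := by
  intro u' hsub hne hcong
  exact hne (hsub.antisymm ((hcong w le_rfl).mpr (List.Sublist.refl w)))

theorem stmt15 {A : Type*} [Fintype A] [Nonempty A] (u v : List A) :
    pieceH u ≤ pieceH (u ++ v) ∧ pieceH v ≤ pieceH (u ++ v) ∧
    rho u ≤ rho (u ++ v) ∧ rho v ≤ rho (u ++ v) := by
  have hmem : pieceH (u ++ v) ∈ {n : ℕ | ∀ w : List A, SimonCong n (u ++ v) w → w = u ++ v} :=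
    Nat.sInf_mem ⟨_, hSet_nonempty (u ++ v)⟩
  have rmem : rho (u ++ v) ∈ {m : ℕ | MReduced m (u ++ v)} :=
    Nat.sInf_mem ⟨_, mSet_nonempty (u ++ v)⟩
  refine ⟨?_, ?_, ?_, ?_⟩
  · apply Nat.sInf_le
    intro w hw
    have := hmem (w ++ v) (congR hw v)
    exact List.append_cancel_right this
  · apply Nat.sInf_le
    intro w hw
    have := hmem (u ++ w) (congL hw u)
    exact List.append_cancel_left this
  · apply Nat.sInf_le
    intro u' hsub hne hcong
    exact rmem (u' ++ v) (hsub.append (List.Sublist.refl v))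
      (fun h => hne (List.append_cancel_right h)) (congR hcong v)
  · apply Nat.sInf_le
    intro v' hsub hne hcong
    exact rmem (u ++ v') ((List.Sublist.refl u).append hsub)
      (fun h => hne (List.append_cancel_left h)) (congL hcong u)
end

section
/- Let A = {a, b} be a two-letter alphabet and let u, v be words over A such that u does not end with the letter a and v does not start with the letter b. Then ρ(u·a·b·v) = 1 + ρ(u·v). -/
/-!
Deleting the letter `c` from `x·c·y` gives a word that is `∼ₖ`-equivalent to `x·c·y` exactly
for `k ≤ r(x, c) + ℓ(c, y)`, the sum of the side distances `r(x, c) = δ(x, x·c)` and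
`ℓ(c, y) = δ(c·y, y)`. Hence a word is `m`-reduced iff each of its letters has deletion weight
`r + ℓ < m`. Over `{a, b}`, inserting `ab` between `u` (not ending in `a`) and `v` (not starting
with `b`) raises by exactly one every side distance measured across the insertion point, so each
old letter gains exactly one unit of weight, while each of the two new letters weighs at most
one more than a neighbouring old letter.
-/

theorem Nat.sInf_setOf_eq_add_one {P Q : ℕ → Prop} (hP : ∃ m, P m) (hP0 : ¬ P 0)
    (hPQ : ∀ m, P (m + 1) ↔ Q m) : sInf {m | P m} = sInf {m | Q m} + 1 := by
  have h1 : 1 ≤ sInf {m | P m} :=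
    Nat.one_le_iff_ne_zero.mpr fun h0 => hP0 (h0 ▸ Nat.sInf_mem hP)
  simp only [← Nat.sInf_add h1, hPQ]

section

open List

variable {A : Type*}

open Classical in
/-- `sideDist c w` is the side distance `ℓ(c, w) = δ(c·w, w)`; `r(x, c)` is
`sideDist c x.reverse`. -/
noncomputable def sideDist (c : A) : List A → ℕ
  | [] => 0
  | e :: w => if e = c then 1 + sideDist c w else min (sideDist c w) (1 + sideDist e w)

@[simp] theorem sideDist_nil (c : A) : sideDist c ([] : List A) = 0 := rfl

theorem sideDist_cons_self (c : A) (w : List A) : sideDist c (c :: w) = 1 + sideDist c w := by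
  simp [sideDist]

theorem sideDist_cons_of_ne {c e : A} (h : e ≠ c) (w : List A) :
    sideDist c (e :: w) = min (sideDist c w) (1 + sideDist e w) := by
  simp [sideDist, h]

theorem sideDist_cons_le_of_ne {c e : A} (h : e ≠ c) (w : List A) :
    sideDist c (e :: w) ≤ sideDist c w := by
  rw [sideDist_cons_of_ne h]
  exact min_le_left _ _

theorem sideDist_cons_le (c e : A) (w : List A) : sideDist c (e :: w) ≤ 1 + sideDist e w := by
  by_cases h : e = c
  · subst h
    rw [sideDist_cons_self]
  · rw [sideDist_cons_of_ne h]
    exact min_le_right _ _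

theorem cons_sublist_of_length_lt_sideDist {c : A} {r w : List A} (hr : r <+ w)
    (hlen : r.length < sideDist c w) : c :: r <+ w := by
  induction w generalizing c r with
  | nil => simp at hlen
  | cons e w ih =>
    by_cases hec : e = c
    · subst hec
      rw [sideDist_cons_self] at hlen
      rcases sublist_cons_iff.mp hr with hrw | ⟨r', rfl, hr'⟩
      · exact hrw.cons_cons e
      · exact (ih hr' (by simp at hlen; omega)).cons_cons e
    · rw [sideDist_cons_of_ne hec] at hlen
      rcases sublist_cons_iff.mp hr with hrw | ⟨r', rfl, hr'⟩
      · exact (ih hrw (by omega)).cons e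
      · have her : e :: r' <+ w := ih hr' (by simp at hlen; omega)
        exact (ih her (by omega)).cons e

theorem exists_sublist_length_eq_sideDist (c : A) (w : List A) :
    ∃ r, r <+ w ∧ r.length = sideDist c w ∧ ¬ c :: r <+ w := by
  induction w generalizing c with
  | nil => exact ⟨[], .slnil, rfl, by simp⟩
  | cons e w ih =>
    by_cases hec : e = c
    · subst hec
      obtain ⟨r, hr, hlen, hnot⟩ := ih e
      exact ⟨e :: r, hr.cons_cons e, by simp [sideDist_cons_self, hlen, add_comm],
        fun h => hnot (cons_sublist_cons.mp h)⟩
    · rw [sideDist_cons_of_ne hec]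
      rcases le_total (sideDist c w) (1 + sideDist e w) with hle | hle
      · obtain ⟨r, hr, hlen, hnot⟩ := ih c
        refine ⟨r, hr.cons e, by rw [min_eq_left hle, hlen], fun h => ?_⟩
        rcases sublist_cons_iff.mp h with h | ⟨_, heq, _⟩
        · exact hnot h
        · exact hec (cons.inj heq).1.symm
      · obtain ⟨r, hr, hlen, hnot⟩ := ih e
        refine ⟨e :: r, hr.cons_cons e, by rw [min_eq_right hle]; simp [hlen, add_comm], fun h => ?_⟩
        rcases sublist_cons_iff.mp h with h | ⟨_, heq, _⟩
        · exact hnot (sublist_of_cons_sublist h)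
        · exact hec (cons.inj heq).1.symm

theorem append_singleton_sublist_of_length_lt_sideDist {c : A} {r x : List A} (hr : r <+ x)
    (hlen : r.length < sideDist c x.reverse) : r ++ [c] <+ x := by
  simpa using reverse_sublist.mpr
    (cons_sublist_of_length_lt_sideDist (reverse_sublist.mpr hr) (by simpa using hlen))

theorem exists_sublist_length_eq_sideDist_reverse (c : A) (x : List A) :
    ∃ r, r <+ x ∧ r.length = sideDist c x.reverse ∧ ¬ r ++ [c] <+ x := by
  obtain ⟨r, hr, hlen, hnot⟩ := exists_sublist_length_eq_sideDist c x.reverse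
  refine ⟨r.reverse, by simpa using reverse_sublist.mpr hr, by simpa using hlen, fun h => hnot ?_⟩
  simpa using reverse_sublist.mpr h

theorem append_cons_eq_append_cases {x y u m : List A} {c : A} (h : x ++ c :: y = u ++ m) :
    (∃ y', u = x ++ c :: y' ∧ y = y' ++ m) ∨ (∃ x', x = u ++ x' ∧ m = x' ++ c :: y) := by
  rcases append_eq_append_iff.mp h with ⟨_ | ⟨e, k⟩, rfl, hk⟩ | ⟨k, rfl, rfl⟩
  · exact .inr ⟨[], by simp, by simpa using hk.symm⟩
  · obtain ⟨rfl, rfl⟩ := cons.inj hk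
    exact .inl ⟨k, rfl, rfl⟩
  · exact .inr ⟨k, rfl, rfl⟩

theorem not_append_cons_sublist_append {c : A} {r s x y : List A} (hr : ¬ r ++ [c] <+ x)
    (hs : ¬ c :: s <+ y) : ¬ r ++ c :: s <+ x ++ y := by
  intro h
  obtain ⟨γ, δ, heq, hγ, hδ⟩ := sublist_append_iff.mp h
  rcases append_cons_eq_append_cases heq with ⟨t, rfl, -⟩ | ⟨t, -, rfl⟩
  · exact hr (((nil_sublist t).cons_cons c).append_left r |>.trans hγ)
  · exact hs ((sublist_append_right t _).trans hδ)

noncomputable def deletionWeight (x : List A) (c : A) (y : List A) : ℕ :=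
  sideDist c x.reverse + sideDist c y

theorem sublist_append_of_sublist_append_cons {c : A} {s x y : List A} (hs : s <+ x ++ c :: y)
    (hlen : s.length ≤ deletionWeight x c y) : s <+ x ++ y := by
  obtain ⟨s₁, t, rfl, h₁, ht⟩ := sublist_append_iff.mp hs
  rcases sublist_cons_iff.mp ht with ht | ⟨s₂, rfl, h₂⟩
  · exact h₁.append ht
  · simp only [deletionWeight, length_append, length_cons] at hlen
    rcases lt_or_ge s₁.length (sideDist c x.reverse) with h | h
    · simpa using (append_singleton_sublist_of_length_lt_sideDist h₁ h).append h₂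
    · exact h₁.append (cons_sublist_of_length_lt_sideDist h₂ (by omega))

theorem simonCong_append_cons_iff (x y : List A) (c : A) (n : ℕ) :
    SimonCong n (x ++ y) (x ++ c :: y) ↔ n ≤ deletionWeight x c y := by
  refine ⟨fun h => ?_, fun hn s hs => ⟨fun h => h.trans ((sublist_cons_self c y).append_left x),
    fun h => sublist_append_of_sublist_append_cons h (hs.trans hn)⟩⟩
  by_contra! hn
  obtain ⟨r, hr, hrlen, hrnot⟩ := exists_sublist_length_eq_sideDist_reverse c x
  obtain ⟨s, hs, hslen, hsnot⟩ := exists_sublist_length_eq_sideDist c y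
  refine not_append_cons_sublist_append hrnot hsnot ((h _ ?_).mpr (hr.append (hs.cons_cons c)))
  simp only [deletionWeight, length_append, length_cons] at hn ⊢
  omega

theorem exists_eq_append_cons_of_sublist {l w : List A} (h : l <+ w) (hne : l ≠ w) :
    ∃ x c y, w = x ++ c :: y ∧ l <+ x ++ y := by
  induction h with
  | slnil => exact absurd rfl hne
  | cons e h => exact ⟨[], e, _, rfl, h⟩
  | cons_cons e _ ih =>
    obtain ⟨x, c, y, rfl, hs⟩ := ih (fun h => hne (congrArg (e :: ·) h))
    exact ⟨e :: x, c, y, rfl, hs.cons_cons e⟩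

theorem mReduced_iff {m : ℕ} {w : List A} :
    MReduced m w ↔ ∀ x c y, w = x ++ c :: y → deletionWeight x c y < m := by
  constructor
  · rintro h x c y rfl
    by_contra! hm
    exact h (x ++ y) ((sublist_cons_self c y).append_left x)
      (fun he => by simpa using congrArg length he) ((simonCong_append_cons_iff x y c m).mpr hm)
  · rintro h u' hsub hne hcong
    obtain ⟨x, c, y, rfl, hs⟩ := exists_eq_append_cons_of_sublist hsub hne
    have hxy : SimonCong m (x ++ y) (x ++ c :: y) := fun s hsm =>
      ⟨fun h' => h'.trans ((sublist_cons_self c y).append_left x),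
        fun h' => ((hcong s hsm).mpr h').trans hs⟩
    exact (h x c y rfl).not_ge ((simonCong_append_cons_iff x y c m).mp hxy)

theorem not_mReduced_zero {w : List A} (hw : w ≠ []) : ¬ MReduced 0 w := fun h =>
  h [] (nil_sublist w) hw.symm fun s hs => by simp [length_eq_zero_iff.mp (Nat.le_zero.mp hs)]

theorem mReduced_length_s18 (w : List A) : MReduced w.length w := fun _ hsub hne hc =>
  hne (hsub.antisymm ((hc w le_rfl).mpr (Sublist.refl w)))

theorem sideDist_append_eq_one_add {w w' : List A} (h : ∀ c, sideDist c w' = 1 + sideDist c w)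
    (y : List A) (c : A) : sideDist c (y ++ w') = 1 + sideDist c (y ++ w) := by
  induction y generalizing c with
  | nil => exact h c
  | cons e y ih =>
    by_cases hec : e = c
    · subst hec
      simp only [cons_append, sideDist_cons_self, ih]
    · simp only [cons_append, sideDist_cons_of_ne hec, ih]
      omega

section Binary

variable {p q : A}

theorem sideDist_le_sideDist_of_head?_ne (hbin : ∀ e, e = p ∨ e = q) {v : List A}
    (hv : v.head? ≠ some q) : sideDist q v ≤ sideDist p v := by
  cases v with
  | nil => simp
  | cons e v =>
    obtain rfl | rfl := hbin e
    · rw [sideDist_cons_self]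
      exact sideDist_cons_le q _ v
    · simp at hv

theorem sideDist_cons_cons_of_head?_ne (hpq : p ≠ q) (hbin : ∀ e, e = p ∨ e = q) {v : List A}
    (hv : v.head? ≠ some q) : sideDist q (p :: q :: v) = 1 + sideDist q v := by
  have := sideDist_le_sideDist_of_head?_ne hbin hv
  rw [sideDist_cons_of_ne hpq, sideDist_cons_self, sideDist_cons_of_ne hpq.symm]
  omega

theorem sideDist_cons_cons_cons_of_head?_ne (hpq : p ≠ q) (hbin : ∀ e, e = p ∨ e = q)
    {v : List A} (hv : v.head? ≠ some q) (c : A) :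
    sideDist c (q :: p :: q :: v) = 1 + sideDist c (q :: v) := by
  have key := sideDist_cons_cons_of_head?_ne hpq hbin hv
  obtain rfl | rfl := hbin c
  · simp only [sideDist_cons_of_ne hpq.symm, sideDist_cons_self, key]
    omega
  · rw [sideDist_cons_self, sideDist_cons_self, key]

theorem sideDist_append_cons_cons (hpq : p ≠ q) (hbin : ∀ e, e = p ∨ e = q) {v : List A}
    (hv : v.head? ≠ some q) {c : A} {y : List A} (hy : (c :: y).getLast? = some q) :
    sideDist c (y ++ p :: q :: v) = 1 + sideDist c (y ++ v) := by
  rcases eq_nil_or_concat' y with rfl | ⟨y, e, rfl⟩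
  · obtain rfl : c = q := by simpa using hy
    exact sideDist_cons_cons_of_head?_ne hpq hbin hv
  · obtain rfl : e = q := by rw [← cons_append, getLast?_append] at hy; simpa using hy
    simpa using sideDist_append_eq_one_add (sideDist_cons_cons_cons_of_head?_ne hpq hbin hv) y c

end Binary

section Insertion

variable {a b : A}

theorem eq_nil_or_eq_append_singleton (hbin : ∀ e, e = a ∨ e = b) {u : List A}
    (hu : u.getLast? ≠ some a) : u = [] ∨ ∃ u₀, u = u₀ ++ [b] := by
  rcases eq_nil_or_concat' u with rfl | ⟨u₀, e, rfl⟩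
  · exact .inl rfl
  · obtain rfl | rfl := hbin e
    · simp at hu
    · exact .inr ⟨u₀, rfl⟩

theorem eq_nil_or_eq_cons (hbin : ∀ e, e = a ∨ e = b) {v : List A} (hv : v.head? ≠ some b) :
    v = [] ∨ ∃ v₀, v = a :: v₀ := by
  cases v with
  | nil => exact .inl rfl
  | cons e v₀ =>
    obtain rfl | rfl := hbin e
    · exact .inr ⟨v₀, rfl⟩
    · simp at hv

theorem deletionWeight_insert_of_eq_left (hab : a ≠ b) (hbin : ∀ e, e = a ∨ e = b)
    {u v : List A} (hu : u.getLast? ≠ some a) (hv : v.head? ≠ some b) {x y : List A} {c : A}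
    (h : u = x ++ c :: y) :
    deletionWeight x c (y ++ a :: b :: v) = 1 + deletionWeight x c (y ++ v) := by
  have hy : (c :: y).getLast? = some b := by
    rcases eq_nil_or_eq_append_singleton hbin hu with rfl | ⟨u₀, rfl⟩
    · simp at h
    · rw [← getLast?_append_cons (l₁ := x), ← h]
      simp
  simp only [deletionWeight, sideDist_append_cons_cons hab hbin hv hy]
  omega

theorem deletionWeight_insert_of_eq_right (hab : a ≠ b) (hbin : ∀ e, e = a ∨ e = b)
    {u v : List A} (hu : u.getLast? ≠ some a) (hv : v.head? ≠ some b) {x y : List A} {c : A}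
    (h : v = x ++ c :: y) :
    deletionWeight (u ++ a :: b :: x) c y = 1 + deletionWeight (u ++ x) c y := by
  have hx : (c :: x.reverse).getLast? = some a := by
    rcases eq_nil_or_eq_cons hbin hv with rfl | ⟨v₀, rfl⟩
    · simp at h
    · have hhead := congrArg head? h
      rw [show c :: x.reverse = (x ++ [c]).reverse by simp, getLast?_reverse]
      simpa [head?_append] using hhead.symm
  have := sideDist_append_cons_cons hab.symm (fun e => (hbin e).symm) (by rwa [head?_reverse]) hx
  simp only [deletionWeight]
  simp at this ⊢
  omega

theorem deletionWeight_inserted_fst_lt (hab : a ≠ b) (hbin : ∀ e, e = a ∨ e = b)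
    {u v : List A} (hu : u.getLast? ≠ some a) (hv : v.head? ≠ some b) {m : ℕ}
    (h : ∀ x c y, u ++ v = x ++ c :: y → deletionWeight x c y < m) :
    deletionWeight u a (b :: v) < m + 1 := by
  simp only [deletionWeight] at h ⊢
  rcases eq_nil_or_eq_cons hbin hv with rfl | ⟨v₀, rfl⟩
  · rcases eq_nil_or_eq_append_singleton hbin hu with rfl | ⟨u₀, rfl⟩
    · simp [sideDist_cons_of_ne hab.symm]
    · have := h u₀ b [] (by simp)
      have := sideDist_cons_le a b u₀.reverse
      simp [sideDist_cons_of_ne hab.symm] at *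
      omega
  · have := h u a v₀ rfl
    have := sideDist_cons_le_of_ne hab.symm (a :: v₀)
    rw [sideDist_cons_self] at this
    omega

theorem deletionWeight_inserted_snd_lt (hab : a ≠ b) (hbin : ∀ e, e = a ∨ e = b)
    {u v : List A} (hu : u.getLast? ≠ some a) (hv : v.head? ≠ some b) {m : ℕ}
    (h : ∀ x c y, u ++ v = x ++ c :: y → deletionWeight x c y < m) :
    deletionWeight (u ++ [a]) b v < m + 1 := by
  simp only [deletionWeight] at h ⊢
  rcases eq_nil_or_eq_append_singleton hbin hu with rfl | ⟨u₀, rfl⟩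
  · rcases eq_nil_or_eq_cons hbin hv with rfl | ⟨v₀, rfl⟩
    · simp [sideDist_cons_of_ne hab]
    · have := h [] a v₀ rfl
      have := sideDist_cons_le b a v₀
      simp [sideDist_cons_of_ne hab] at *
      omega
  · have := h u₀ b v (by simp)
    have := sideDist_cons_le_of_ne hab (b :: u₀.reverse)
    rw [sideDist_cons_self] at this
    simp
    omega

theorem mReduced_succ_iff (hab : a ≠ b) (hbin : ∀ e, e = a ∨ e = b) {u v : List A}
    (hu : u.getLast? ≠ some a) (hv : v.head? ≠ some b) (m : ℕ) :
    MReduced (m + 1) (u ++ a :: b :: v) ↔ MReduced m (u ++ v) := by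
  simp only [mReduced_iff]
  constructor
  · intro h x c y hxy
    rcases append_cons_eq_append_cases hxy.symm with ⟨y, hxu, rfl⟩ | ⟨x, rfl, hxv⟩
    · have := h x c (y ++ a :: b :: v) (by simp [hxu])
      rw [deletionWeight_insert_of_eq_left hab hbin hu hv hxu] at this
      omega
    · have := h (u ++ a :: b :: x) c y (by simp [hxv])
      rw [deletionWeight_insert_of_eq_right hab hbin hu hv hxv] at this
      omega
  · intro h x c y hxy
    rcases append_cons_eq_append_cases hxy.symm with ⟨y, hxu, rfl⟩ | ⟨x, rfl, hxv⟩
    · rw [deletionWeight_insert_of_eq_left hab hbin hu hv hxu]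
      have := h x c (y ++ v) (by simp [hxu])
      omega
    · rcases x with _ | ⟨e, _ | ⟨f, x⟩⟩
      · obtain ⟨rfl, rfl⟩ := cons.inj hxv
        simpa using deletionWeight_inserted_fst_lt hab hbin hu hv h
      · obtain ⟨rfl, rfl, rfl⟩ : a = e ∧ b = c ∧ v = y := by simpa using hxv
        simpa using deletionWeight_inserted_snd_lt hab hbin hu hv h
      · obtain ⟨rfl, rfl, hvx⟩ : a = e ∧ b = f ∧ v = x ++ c :: y := by simpa using hxv
        rw [deletionWeight_insert_of_eq_right hab hbin hu hv hvx]
        have := h (u ++ x) c y (by simp [hvx])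
        omega

end Insertion

end

theorem stmt18 {A : Type*} [Fintype A] (hA : Fintype.card A = 2)
    (a b : A) (hab : a ≠ b) (u v : List A)
    (hu : u.getLast? ≠ some a) (hv : v.head? ≠ some b) :
    rho (u ++ a :: b :: v) = 1 + rho (u ++ v) := by
  classical
  have hbin : ∀ e : A, e = a ∨ e = b := by
    have huniv : ({a, b} : Finset A) = Finset.univ :=
      Finset.eq_univ_of_card _ (by rw [Finset.card_pair hab, hA])
    simpa using Finset.eq_univ_iff_forall.mp huniv
  rw [rho, rho, add_comm]
  exact Nat.sInf_setOf_eq_add_one ⟨_, mReduced_length_s18 _⟩ (not_mReduced_zero (by simp))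
    (mReduced_succ_iff hab hbin hu hv)
end

section
/- Let A be an alphabet with exactly 2 letters. Then every word u over A satisfies |u| ≤ ⌊h(u)²/4⌋ + h(u) − 1, where |u| is the length of u. -/
section Capacity

variable {A : Type*} [DecidableEq A]

/-- A lower bound for the side distance `sideL [a] w`, computed by the recursion that side
distances satisfy when a letter is prepended. -/
def capacity : List A → A → ℕ
  | [], _ => 0
  | c :: t, a => if c = a then capacity t a + 1 else min (capacity t a) (capacity t c + 1)

theorem capacity_cons (c : A) (t : List A) (a : A) :
    capacity (c :: t) a =
      if c = a then capacity t a + 1 else min (capacity t a) (capacity t c + 1) := rfl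

theorem cons_sublist_of_length_lt_capacity {w z : List A} {a : A} (hz : z.Sublist w)
    (hlen : z.length < capacity w a) : (a :: z).Sublist w := by
  induction w generalizing z a with
  | nil => simp [capacity] at hlen
  | cons c t ih =>
    by_cases hca : c = a
    · subst hca
      rw [capacity_cons, if_pos rfl] at hlen
      cases hz with
      | cons _ h => exact h.cons_cons c
      | cons_cons _ h => exact (ih h (by simpa using hlen)).cons_cons c
    · rw [capacity_cons, if_neg hca, lt_min_iff] at hlen
      cases hz with
      | cons _ h => exact (ih h hlen.1).cons c
      | cons_cons _ h =>
        have hc : (c :: _).Sublist t := ih h (by simpa using hlen.2)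
        exact (ih hc (by simpa using hlen.1)).cons c

/-- A short subword using the inserted `c` can borrow a `c` from the end of `p` or from the start
of `s` instead. -/
theorem simonCong_append_insert {p s : List A} {c : A} {n : ℕ}
    (h : n ≤ capacity p.reverse c + capacity s c) :
    SimonCong n (p ++ s) (p ++ c :: s) := by
  intro w hw
  refine ⟨fun hsub => hsub.trans ((List.Sublist.refl p).append (List.sublist_cons_self c s)), ?_⟩
  intro hsub
  obtain ⟨w₁, w₂, rfl, hw₁, hw₂⟩ := List.sublist_append_iff.1 hsub
  rw [← List.singleton_append] at hw₂
  obtain ⟨w₃, w₄, rfl, hw₃, hw₄⟩ := List.sublist_append_iff.1 hw₂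
  rcases List.sublist_singleton.mp hw₃ with rfl | rfl
  · simpa using hw₁.append hw₄
  · simp only [List.length_append, List.length_singleton] at hw
    by_cases hp : w₁.length < capacity p.reverse c
    · have hc : (c :: w₁.reverse).Sublist p.reverse :=
        cons_sublist_of_length_lt_capacity (List.reverse_sublist.2 hw₁) (by simpa using hp)
      have hc' : (w₁ ++ [c]).Sublist p := by simpa using List.reverse_sublist.2 hc
      simpa using hc'.append hw₄
    · rw [List.singleton_append]
      exact hw₁.append (cons_sublist_of_length_lt_capacity hw₄ (by omega))

end Capacity

theorem eq_of_simonCong_length_succ {A : Type*} {u v : List A}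
    (h : SimonCong (u.length + 1) u v) : v = u := by
  have huv : u.Sublist v := (h u (by omega)).1 (List.Sublist.refl u)
  by_cases hv : v.length ≤ u.length + 1
  · exact ((h v hv).2 (List.Sublist.refl v)).antisymm huv
  · have htake : (v.take (u.length + 1)).length = u.length + 1 := by
      rw [List.length_take]; omega
    have := ((h _ htake.le).2 (List.take_sublist _ _)).length_le
    omega

theorem eq_of_simonCong_pieceH {A : Type*} {u v : List A} (h : SimonCong (pieceH u) u v) :
    v = u :=
  Nat.sInf_mem (s := {n | ∀ v : List A, SimonCong n u v → v = u})
    ⟨u.length + 1, fun _ => eq_of_simonCong_length_succ⟩ v h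

theorem capacity_add_capacity_lt_pieceH {A : Type*} [DecidableEq A] {p s : List A} (c : A) :
    capacity p.reverse c + capacity s c < pieceH (p ++ s) := by
  by_contra! h
  have := congrArg List.length (eq_of_simonCong_pieceH (simonCong_append_insert h))
  simp at this

section Pairs

variable {A : Type*} [DecidableEq A]

/-- `capPairs p s`, for a reversed prefix `p`, lists for each position of `s` the capacities of
the word on its left and of the word on its right with respect to the letter at that position. -/
def capPairs : List A → List A → List (ℕ × ℕ)
  | _, [] => []
  | p, c :: s => (capacity p c, capacity s c) :: capPairs (c :: p) s

theorem length_capPairs (p s : List A) : (capPairs p s).length = s.length := by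
  induction s generalizing p with
  | nil => rfl
  | cons c s ih => simp [capPairs, ih]

theorem exists_of_mem_capPairs {p s : List A} {x : ℕ × ℕ} (hx : x ∈ capPairs p s) :
    ∃ q c r, s = q ++ c :: r ∧ x = (capacity (q.reverse ++ p) c, capacity r c) := by
  induction s generalizing p with
  | nil => simp [capPairs] at hx
  | cons c s ih =>
    rcases List.mem_cons.1 hx with rfl | hx
    · exact ⟨[], c, s, rfl, rfl⟩
    · obtain ⟨q, d, r, rfl, rfl⟩ := ih hx
      exact ⟨c :: q, d, r, rfl, by simp⟩

theorem fst_add_snd_add_two_le_pieceH {u : List A} {x : ℕ × ℕ} (hx : x ∈ capPairs [] u) :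
    x.1 + x.2 + 2 ≤ pieceH u := by
  obtain ⟨q, c, r, rfl, rfl⟩ := exists_of_mem_capPairs hx
  have := capacity_add_capacity_lt_pieceH (p := q) (s := c :: r) c
  rw [capacity_cons, if_pos rfl] at this
  simp only [List.append_nil]
  omega

end Pairs

/-- Prepending a letter whose capacity is `v` raises `potential v` by one, and prepending any
letter never lowers it; since `potential v x y ≤ v + 2`, the value `v` occurs at most `v + 2`
times. -/
def potential (v x y : ℕ) : ℕ :=
  min (min x y) (v + 1) + if v + 1 ≤ max x y then 1 else 0

theorem potential_le (v x y : ℕ) : potential v x y ≤ v + 2 := by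
  unfold potential; split_ifs <;> omega

theorem potential_comm (v x y : ℕ) : potential v x y = potential v y x := by
  unfold potential; rw [min_comm x y, max_comm x y]

theorem potential_step (v x y : ℕ) :
    (if x = v then 1 else 0) + potential v x y ≤ potential v (x + 1) (min y (x + 1)) := by
  unfold potential; split_ifs <;> omega

section TwoLetters

variable {A : Type*} [DecidableEq A] {a b : A}

theorem potential_capacity_cons (hab : a ≠ b) (hcov : ∀ c : A, c = a ∨ c = b)
    (v : ℕ) (c : A) (w : List A) :
    (if capacity w c = v then 1 else 0) + potential v (capacity w a) (capacity w b) ≤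
      potential v (capacity (c :: w) a) (capacity (c :: w) b) := by
  rcases hcov c with rfl | rfl
  · rw [capacity_cons, capacity_cons, if_pos rfl, if_neg hab]
    exact potential_step _ _ _
  · rw [capacity_cons, capacity_cons, if_pos rfl, if_neg hab.symm,
      potential_comm v (capacity w a), potential_comm v (min _ _)]
    exact potential_step _ _ _

theorem countP_fst_capPairs_add_potential_le (hab : a ≠ b) (hcov : ∀ c : A, c = a ∨ c = b)
    (v : ℕ) (p s : List A) :
    (capPairs p s).countP (fun x => x.1 = v) + potential v (capacity p a) (capacity p b) ≤
      v + 2 := by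
  induction s generalizing p with
  | nil => simpa [capPairs] using potential_le _ _ _
  | cons c s ih =>
    have := potential_capacity_cons hab hcov v c p
    have := ih (c :: p)
    simp only [capPairs, List.countP_cons, decide_eq_true_eq]
    omega

theorem countP_snd_capPairs_le (hab : a ≠ b) (hcov : ∀ c : A, c = a ∨ c = b)
    (v : ℕ) (p s : List A) :
    (capPairs p s).countP (fun x => x.2 = v) ≤ potential v (capacity s a) (capacity s b) := by
  induction s generalizing p with
  | nil => simp [capPairs]
  | cons c s ih =>
    have := potential_capacity_cons hab hcov v c s
    have := ih (c :: p)
    simp only [capPairs, List.countP_cons, decide_eq_true_eq]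
    omega

end TwoLetters

theorem countP_lt_eq_sum_countP_eq {α : Type*} (l : List α) (f : α → ℕ) (M : ℕ) :
    l.countP (fun x => f x < M) = ∑ v ∈ Finset.range M, l.countP (fun x => f x = v) := by
  induction l with
  | nil => simp
  | cons x l ih =>
    simp only [List.countP_cons, Finset.sum_add_distrib, ih, decide_eq_true_eq,
      Finset.sum_ite_eq, Finset.mem_range]

theorem two_mul_countP_lt_le {α : Type*} (l : List α) (f : α → ℕ)
    (hf : ∀ v, l.countP (fun x => f x = v) ≤ v + 2) (M : ℕ) :
    2 * l.countP (fun x => f x < M) ≤ M * (M + 3) := by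
  induction M with
  | zero => simp
  | succ M ih =>
    have := hf M
    rw [countP_lt_eq_sum_countP_eq] at ih ⊢
    rw [Finset.sum_range_succ]
    nlinarith

theorem add_le_sq_div_four_add_sub_one {n a b : ℕ} (ha : 2 * a ≤ n / 2 * (n / 2 + 3))
    (hb : 2 * b ≤ (n - n / 2 - 1) * (n - n / 2 - 1 + 3)) : a + b ≤ n ^ 2 / 4 + n - 1 := by
  obtain ⟨k, rfl | rfl⟩ := Nat.even_or_odd' n
  · rcases k with _ | k
    · simp at ha hb
      omega
    rw [show 2 * (k + 1) / 2 = k + 1 by omega] at ha hb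
    rw [show 2 * (k + 1) - (k + 1) - 1 = k by omega] at hb
    rw [show (2 * (k + 1)) ^ 2 / 4 = k ^ 2 + 2 * k + 1 by rw [mul_pow]; norm_num; ring]
    have : a + b ≤ k ^ 2 + 4 * k + 2 := by nlinarith
    omega
  · rw [show (2 * k + 1) / 2 = k by omega] at ha hb
    rw [show 2 * k + 1 - k - 1 = k by omega] at hb
    rw [show (2 * k + 1) ^ 2 / 4 = k ^ 2 + k by
      rw [show (2 * k + 1) ^ 2 = 1 + 4 * (k ^ 2 + k) by ring]; omega]
    have : a + b ≤ k ^ 2 + 3 * k := by nlinarith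
    omega

/-- Entries with first coordinate below `n / 2` are counted through `hfst`, the others through
`hsnd`. -/
theorem length_le_of_countP_fst_le_of_countP_snd_le (l : List (ℕ × ℕ)) (n : ℕ)
    (hsum : ∀ x ∈ l, x.1 + x.2 + 2 ≤ n)
    (hfst : ∀ v, l.countP (fun x => x.1 = v) ≤ v + 2)
    (hsnd : ∀ v, l.countP (fun x => x.2 = v) ≤ v + 2) :
    l.length ≤ n ^ 2 / 4 + n - 1 := by
  have hlarge : 2 * l.countP (fun x => ¬ x.1 < n / 2) ≤
      (n - n / 2 - 1) * (n - n / 2 - 1 + 3) := by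
    refine le_trans ?_ (two_mul_countP_lt_le l Prod.snd hsnd (n - n / 2 - 1))
    refine Nat.mul_le_mul_left 2 (List.countP_mono_left fun x hx hlt => ?_)
    have := hsum x hx
    simp only [decide_eq_true_eq] at hlt ⊢
    omega
  have hsplit := List.length_eq_countP_add_countP (fun x => decide (x.1 < n / 2)) (l := l)
  simp only [decide_not, Bool.decide_eq_true] at hlarge hsplit
  rw [hsplit]
  exact add_le_sq_div_four_add_sub_one (two_mul_countP_lt_le l Prod.fst hfst (n / 2)) hlarge

theorem stmt19 {A : Type*} [Fintype A] (hA : Fintype.card A = 2) (u : List A) :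
    u.length ≤ pieceH u ^ 2 / 4 + pieceH u - 1 := by
  classical
  obtain ⟨a, b, hab, huniv⟩ := Nat.card_eq_two_iff.1 (Nat.card_eq_fintype_card.trans hA)
  have hcov (c : A) : c = a ∨ c = b := by simpa [← huniv] using Set.mem_univ c
  rw [← length_capPairs [] u]
  exact length_le_of_countP_fst_le_of_countP_snd_le _ _
    (fun _ => fst_add_snd_add_two_le_pieceH)
    (fun v => le_trans (Nat.le_add_right _ _) (countP_fst_capPairs_add_potential_le hab hcov v [] u))
    (fun v => (countP_snd_capPairs_le hab hcov v [] u).trans (potential_le _ _ _))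
end
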